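/- Pointwise dichotomy over the fixed sets of the sphere symmetries: let (z,w) ∈ P with w ≠ 0. (i) If z is real (conj z = z), then s₁(z,w) = (z,w) or s₁(z,w) = T(z,w). (ii) If z is purely imaginary (−conj z = z), then s₂(z,w) = (z,w) or s₂(z,w) = T(z,w). (iii) If |z| = 1 (z·conj z = 1), then s₃(z,w) = (z,w) or s₃(z,w) = T(z,w). -/
import Mathlib


noncomputable section
open Complex ComplexConjugate

/-- `α = exp(iπ/4)`. -/
def bolzaAlpha : ℂ := Complex.exp (Real.pi * Complex.I / 4)

/-- `β = exp(3iπ/4)`. -/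
def bolzaBeta : ℂ := Complex.exp (3 * Real.pi * Complex.I / 4)

/-- The affine Bolza curve `P = {(z,w) : w²(z+α)(z+β) = z(z−α)(z−β)}`. -/
def BolzaCurve : Set (ℂ × ℂ) :=
  {p | p.2 ^ 2 * (p.1 + bolzaAlpha) * (p.1 + bolzaBeta)
       = p.1 * (p.1 - bolzaAlpha) * (p.1 - bolzaBeta)}

/-- The symmetry `s₁(z,w) = (conj z, conj z / conj w)`. -/
def s1 (p : ℂ × ℂ) : ℂ × ℂ := (conj p.1, conj p.1 / conj p.2)

/-- The symmetry `s₂(z,w) = (−conj z, i·conj w)`. -/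
def s2 (p : ℂ × ℂ) : ℂ × ℂ := (-conj p.1, Complex.I * conj p.2)

/-- The symmetry `s₃(z,w) = (1/conj z, conj w / conj z)`. -/
def s3 (p : ℂ × ℂ) : ℂ × ℂ := (1 / conj p.1, conj p.2 / conj p.1)

/-- The hyperelliptic involution `T(z,w) = (z,−w)`. -/
def hypT (p : ℂ × ℂ) : ℂ × ℂ := (p.1, -p.2)

lemma bolza_a4 : bolzaAlpha ^ 4 = -1 := by
  rw [bolzaAlpha, ← Complex.exp_nat_mul]
  push_cast
  rw [show (4:ℂ) * (↑Real.pi * Complex.I / 4) = ↑Real.pi * Complex.I by ring,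
    Complex.exp_pi_mul_I]
lemma bolza_b3 : bolzaBeta = bolzaAlpha ^ 3 := by
  rw [bolzaAlpha, bolzaBeta, ← Complex.exp_nat_mul]
  push_cast
  ring_nf
lemma bolza_a0 : bolzaAlpha ≠ 0 := Complex.exp_ne_zero _
lemma bolza_ca : conj bolzaAlpha = -bolzaAlpha ^ 3 := by
  have h1 : conj bolzaAlpha = bolzaAlpha⁻¹ := by
    rw [bolzaAlpha, ← Complex.exp_conj, ← Complex.exp_neg]
    congr 1
    simp only [map_div₀, map_mul, Complex.conj_I, Complex.conj_ofReal, map_ofNat]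
    ring
  have h2 : (-bolzaAlpha ^ 3) * bolzaAlpha = 1 := by linear_combination -bolza_a4
  rw [h1, ← eq_inv_of_mul_eq_one_left h2]
lemma bolza_cb : conj bolzaBeta = -bolzaAlpha := by
  rw [bolza_b3, map_pow, bolza_ca]
  linear_combination (bolzaAlpha - bolzaAlpha^5) * bolza_a4


/-- Pointwise dichotomy over the fixed sets of the sphere symmetries: on the
Bolza curve, over the real axis `s₁` acts as the identity or as `T`, over the
imaginary axis so does `s₂`, and over the unit circle so does `s₃`. -/
theorem pointwise_dichotomy (z w : ℂ) (hP : (z, w) ∈ BolzaCurve) (hw : w ≠ 0) :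
    (conj z = z → s1 (z, w) = (z, w) ∨ s1 (z, w) = hypT (z, w)) ∧
    (-conj z = z → s2 (z, w) = (z, w) ∨ s2 (z, w) = hypT (z, w)) ∧
    (z * conj z = 1 → s3 (z, w) = (z, w) ∨ s3 (z, w) = hypT (z, w)) := by
  have ha4 := bolza_a4
  have hA0 := bolza_a0
  set A := bolzaAlpha with hAdef
  simp only [BolzaCurve, Set.mem_setOf_eq] at hP
  -- conjugated equation
  have hc := congrArg (starRingEnd ℂ) hP
  simp only [map_mul, map_add, map_sub, map_pow, bolza_ca, bolza_cb] at hc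
  rw [bolza_b3] at hP
  -- hc : (conj w)^2 * (conj z + -A^3) * (conj z + -A) = conj z * (conj z - -A^3) * (conj z - -A)
  -- auxiliary nonvanishing facts
  have h1 : (1:ℂ) + A^2 ≠ 0 := by
    intro h
    have : (1:ℂ) = -1 := by linear_combination ha4 - (A^2-1)*h
    norm_num at this
  have h2A : A + A ≠ 0 := by
    intro h; exact hA0 (by linear_combination h/2)
  have h2A3 : A^3 + A^3 ≠ 0 := by
    intro h
    have : A^3 = 0 := by linear_combination h/2
    exact hA0 (pow_eq_zero_iff (n := 3) (by norm_num) |>.mp this)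
  have hAA3 : A + A^3 ≠ 0 := by
    intro h
    have h' : A * (1 + A^2) = 0 := by linear_combination h
    rcases mul_eq_zero.mp h' with h'' | h''
    · exact hA0 h''
    · exact h1 h''
  have hz4 : z^4 ≠ -1 := by
    intro h
    have hfac : (z - A)*(z + A)*((z - A^3)*(z + A^3)) = 0 := by
      linear_combination h + (-A^2*z^2 + A^4 - 1)*ha4
    rcases mul_eq_zero.mp hfac with h' | h'
    · rcases mul_eq_zero.mp h' with h'' | h''
      · -- z = A
        rw [sub_eq_zero.mp h''] at hP
        have hne : w^2*(A+A)*(A+A^3) ≠ 0 :=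
          mul_ne_zero (mul_ne_zero (pow_ne_zero 2 hw) h2A) hAA3
        exact hne (hP.trans (by ring))
      · -- z = -A
        rw [eq_neg_of_add_eq_zero_left h''] at hP
        have hne : (-A)*(-A-A)*(-A-A^3) ≠ 0 := by
          apply mul_ne_zero (mul_ne_zero (neg_ne_zero.mpr hA0) ?_) ?_
          · intro h3; exact h2A (by linear_combination -h3)
          · intro h3; exact hAA3 (by linear_combination -h3)
        exact hne (by rw [← hP]; ring)
    · rcases mul_eq_zero.mp h' with h'' | h''
      · -- z = A^3
        rw [sub_eq_zero.mp h''] at hP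
        have hne : w^2*(A^3+A)*(A^3+A^3) ≠ 0 := by
          apply mul_ne_zero (mul_ne_zero (pow_ne_zero 2 hw) ?_) h2A3
          intro h3; exact hAA3 (by linear_combination h3)
        exact hne (hP.trans (by ring))
      · -- z = -A^3
        rw [eq_neg_of_add_eq_zero_left h''] at hP
        have hne : (-A^3)*(-A^3-A)*(-A^3-A^3) ≠ 0 := by
          apply mul_ne_zero (mul_ne_zero (neg_ne_zero.mpr ?_) ?_) ?_
          · intro h3; exact hA0 (pow_eq_zero_iff (n := 3) (by norm_num) |>.mp h3)
          · intro h3; exact hAA3 (by linear_combination -h3)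
          · intro h3; exact h2A3 (by linear_combination -h3)
        exact hne (by rw [← hP]; ring)
  have hz41 : z^4 + 1 ≠ 0 := fun h => hz4 (by linear_combination h)
  have hzA : z + A ≠ 0 := by
    intro h; exact hz4 (by linear_combination (z^3 - A*z^2 + A^2*z - A^3)*h + ha4)
  have hzA3 : z + A^3 ≠ 0 := by
    intro h
    exact hz4 (by linear_combination (z^3 - A^3*z^2 + A^6*z - A^9)*h + (A^8 - A^4 + 1)*ha4)
  have hcw : conj w ≠ 0 := by
    intro h; apply hw
    have := congrArg (starRingEnd ℂ) h
    simpa using this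
  refine ⟨?_, ?_, ?_⟩
  · -- real axis
    intro hz
    rw [hz] at hc
    have key : (w^2*(conj w)^2 - z^2) * (z^4+1) = 0 := by
      linear_combination ((conj w)^2*(z-A)*(z-A^3)) * hP + (z*(z-A)*(z-A^3)) * hc +
        ((w^2*(conj w)^2 - z^2)*(A^2*z^2 + 1 - A^4)) * ha4
    have hkey : w^2*(conj w)^2 = z^2 := by
      rcases mul_eq_zero.mp key with h | h
      · linear_combination h
      · exact absurd h hz41
    have hfac : (z/conj w - w)*(z/conj w + w) = 0 := by
      field_simp
      linear_combination -hkey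
    rcases mul_eq_zero.mp hfac with h | h
    · left
      simp only [s1, hz, Prod.mk.injEq]
      exact ⟨trivial, sub_eq_zero.mp h⟩
    · right
      simp only [s1, hypT, hz, Prod.mk.injEq]
      exact ⟨trivial, eq_neg_of_add_eq_zero_left h⟩
  · -- imaginary axis
    intro hz
    have hz' : conj z = -z := by linear_combination -hz
    rw [hz'] at hc
    have key : (w^2 + (conj w)^2) * ((z+A)*(z+A^3)) = 0 := by
      linear_combination hP + hc
    have hkey : (conj w)^2 = -w^2 := by
      rcases mul_eq_zero.mp key with h | h
      · linear_combination h
      · rcases mul_eq_zero.mp h with h' | h'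
        · exact absurd h' hzA
        · exact absurd h' hzA3
    have hfac : (Complex.I*conj w - w)*(Complex.I*conj w + w) = 0 := by
      linear_combination (conj w)^2 * Complex.I_sq - hkey
    rcases mul_eq_zero.mp hfac with h | h
    · left
      simp only [s2, hypT, Prod.mk.injEq]
      exact ⟨hz, sub_eq_zero.mp h⟩
    · right
      simp only [s2, hypT, Prod.mk.injEq]
      exact ⟨hz, eq_neg_of_add_eq_zero_left h⟩
  · -- unit circle
    intro hz
    have hz0 : z ≠ 0 := left_ne_zero_of_mul_eq_one hz
    have hcz0 : conj z ≠ 0 := right_ne_zero_of_mul_eq_one hz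
    have h1Az : (1:ℂ) - A*z ≠ 0 := by
      intro h
      exact hz4 (by linear_combination z^4*ha4 + (1 + A*z + A^2*z^2 + A^3*z^3)*h)
    have h1A3z : (1:ℂ) - A^3*z ≠ 0 := by
      intro h
      exact hz4 (by linear_combination z^4*(A^8 - A^4 + 1)*ha4 + (1 + A^3*z + A^6*z^2 + A^9*z^3)*h)
    -- step A : clear conj z from hc using z * conj z = 1
    have h3 : (conj w)^2 * z * (1 - A^3*z) * (1 - A*z) = (1 + A^3*z)*(1 + A*z) := by
      linear_combination (z^3) * hc -
        ((conj w)^2*z*(1 + z*(conj z) - (A^3+A)*z)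
          - (1 + z*(conj z) + (A^3+A)*z + (z*(conj z) + A^3*z)*(z*(conj z) + A*z))) * hz
    have key : (w^2 - z^2*(conj w)^2) * ((z+A)*(z+A^3)*((1-A*z)*(1-A^3*z))) = 0 := by
      linear_combination ((1-A*z)*(1-A^3*z))*hP + (-z*(z+A)*(z+A^3))*h3 +
        (-2*(A^3+A)*(z^4+z^2))*ha4
    have hkey : w^2 = z^2*(conj w)^2 := by
      rcases mul_eq_zero.mp key with h | h
      · linear_combination h
      · rcases mul_eq_zero.mp h with h' | h'
        · rcases mul_eq_zero.mp h' with h'' | h''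
          · exact absurd h'' hzA
          · exact absurd h'' hzA3
        · rcases mul_eq_zero.mp h' with h'' | h''
          · exact absurd h'' h1Az
          · exact absurd h'' h1A3z
    have hinv : 1 / conj z = z := by
      rw [div_eq_iff hcz0]
      linear_combination -hz
    have hdiv : conj w / conj z = z * conj w := by
      rw [div_eq_iff hcz0]
      linear_combination (-(conj w))*hz
    have hfac : (z*conj w - w)*(z*conj w + w) = 0 := by linear_combination -hkey
    rcases mul_eq_zero.mp hfac with h | h
    · left
      simp only [s3, hypT, Prod.mk.injEq]
      exact ⟨hinv, by rw [hdiv]; exact sub_eq_zero.mp h⟩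
    · right
      simp only [s3, hypT, Prod.mk.injEq]
      exact ⟨hinv, by rw [hdiv]; exact eq_neg_of_add_eq_zero_left h⟩


end
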